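/- arXiv:2407.19343 — 5 statements merged into one kernel-verified Lean document; each statement's English description precedes it below -/
import Mathlib

section
/- Let T be a fixed tree (network) and suppose for each gene k and taxon pair (i,j) the observed distance is δ^{(k)}_{ij} = r_k d_{ij}(T), with r_k > 0 and no error. Then for constants z_k ≠ 0 with Σ_k z_k/r_k ≠ 0, the ERaBLE criterion Q(α̂, b̂) = Σ_k Σ_{i<j} w^{(k)}_{ij}(α̂_k δ^{(k)}_{ij} − d_{ij}(T, b̂))² subject to Σ_k z_k α̂_k = Σ_k z_k has the unique minimizer (α*, b*) = (cα, cb), where α_k = r_k^{-1}, b is the true edge length vector, and c = (Σ_k z_k)/(Σ_k z_k/r_k). -/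
open Matrix BigOperators

/-- In the noiseless case, the ERaBLE criterion subject to the
linear constraint `∑ z_k α̂_k = ∑ z_k` has the unique minimizer `(cα, cb)`
with `α_k = r_k⁻¹` and `c = (∑ z_k)/(∑ z_k / r_k)`. The tree is encoded by
its inheritance matrix `A`, which is injective (path distances on a tree
determine edge lengths uniquely). -/
theorem stmt_0 {K P E : ℕ} (hK : 0 < K) (hE : 0 < E)
    (A : Matrix (Fin P) (Fin E) ℝ)
    (hAinj : Function.Injective A.mulVec)
    (b : Fin E → ℝ) (hb : ∀ e, 0 < b e)
    (r : Fin K → ℝ) (hr : ∀ k, 0 < r k)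
    (w : Fin K → Fin P → ℝ) (hw : ∀ k p, 0 < w k p)
    (z : Fin K → ℝ) (hz : ∀ k, z k ≠ 0)
    (hzr : (∑ k, z k / r k) ≠ 0)
    (δ : Fin K → Fin P → ℝ)
    (hδ : ∀ k p, δ k p = r k * A.mulVec b p)
    (Q : (Fin K → ℝ) → (Fin E → ℝ) → ℝ)
    (hQ : ∀ a bb, Q a bb = ∑ k, ∑ p, w k p * (a k * δ k p - A.mulVec bb p) ^ 2)
    (c : ℝ) (hc : c = (∑ k, z k) / (∑ k, z k / r k)) :
    ∀ a bb, ((∑ k, z k * a k = ∑ k, z k) ∧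
        ∀ a' bb', (∑ k, z k * a' k = ∑ k, z k) → Q a bb ≤ Q a' bb') ↔
      ((a = fun k => c / r k) ∧ bb = c • b) := by
  -- A b ≠ 0 at some coordinate
  have hb0 : b ≠ 0 := by
    intro h
    have := hb ⟨0, hE⟩
    rw [h] at this
    exact lt_irrefl 0 this
  have hAb : A.mulVec b ≠ 0 := by
    intro h
    apply hb0
    apply hAinj
    rw [h, Matrix.mulVec_zero]
  obtain ⟨p0, hp0⟩ : ∃ p, A.mulVec b p ≠ 0 := by
    by_contra h
    push_neg at h
    exact hAb (funext h)
  -- the candidate satisfies the constraint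
  have hcon : ∑ k, z k * (c / r k) = ∑ k, z k := by
    have h1 : ∀ k ∈ Finset.univ, z k * (c / r k) = c * (z k / r k) := fun k _ => by ring
    rw [Finset.sum_congr rfl h1, ← Finset.mul_sum, hc, div_mul_cancel₀ _ hzr]
  -- the candidate achieves Q = 0
  have hQcand : Q (fun k => c / r k) (c • b) = 0 := by
    rw [hQ]
    apply Finset.sum_eq_zero
    intro k _
    apply Finset.sum_eq_zero
    intro p _
    have hs : A.mulVec (c • b) p = c * A.mulVec b p := by
      rw [Matrix.mulVec_smul]; rfl
    rw [hδ, hs]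
    have hrk : r k ≠ 0 := (hr k).ne'
    field_simp
    ring
  -- Q is nonnegative
  have hQnn : ∀ a bb, 0 ≤ Q a bb := by
    intro a bb
    rw [hQ]
    apply Finset.sum_nonneg
    intro k _
    apply Finset.sum_nonneg
    intro p _
    exact mul_nonneg (hw k p).le (sq_nonneg _)
  intro a bb
  constructor
  · rintro ⟨hc1, hmin⟩
    have hle := hmin (fun k => c / r k) (c • b) hcon
    rw [hQcand] at hle
    have hQ0 : Q a bb = 0 := le_antisymm hle (hQnn a bb)
    -- each term is zero
    have hterm : ∀ k p, a k * δ k p - A.mulVec bb p = 0 := by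
      rw [hQ] at hQ0
      intro k p
      have h1 := (Finset.sum_eq_zero_iff_of_nonneg (fun k _ =>
        Finset.sum_nonneg (fun p _ => mul_nonneg (hw k p).le (sq_nonneg _)))).mp hQ0
        k (Finset.mem_univ k)
      have h2 := (Finset.sum_eq_zero_iff_of_nonneg (fun p _ =>
        mul_nonneg (hw k p).le (sq_nonneg _))).mp h1 p (Finset.mem_univ p)
      have := mul_eq_zero.mp h2
      rcases this with h | h
      · exact absurd h (hw k p).ne'
      · exact pow_eq_zero_iff (n := 2) (by norm_num) |>.mp h
    have heq : ∀ k p, a k * (r k * A.mulVec b p) = A.mulVec bb p := by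
      intro k p
      have := hterm k p
      rw [hδ] at this
      linarith
    -- a k * r k is constant t
    have hart : ∀ k, a k * r k = A.mulVec bb p0 / A.mulVec b p0 := by
      intro k
      have := heq k p0
      field_simp
      linarith [this]
    set t := A.mulVec bb p0 / A.mulVec b p0 with ht
    have ha : ∀ k, a k = t / r k := by
      intro k
      rw [eq_div_iff (hr k).ne']
      exact hart k
    -- constraint forces t = c
    have htc : t = c := by
      have h1 : ∑ k, z k * a k = t * ∑ k, z k / r k := by
        rw [Finset.mul_sum]
        apply Finset.sum_congr rfl
        intro k _
        rw [ha k]; ring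
      rw [h1] at hc1
      rw [hc]
      field_simp at hc1 ⊢
      linarith
    constructor
    · funext k
      rw [ha k, htc]
    · apply hAinj
      funext p
      have := heq ⟨0, hK⟩ p
      rw [ha, htc] at this
      have hr0 : r (⟨0, hK⟩ : Fin K) ≠ 0 := (hr _).ne'
      have hs : A.mulVec (c • b) p = c * A.mulVec b p := by
        rw [Matrix.mulVec_smul]; rfl
      rw [hs, ← this]
      field_simp
  · rintro ⟨ha, hbb⟩
    subst ha hbb
    exact ⟨hcon, fun a' bb' _ => hQcand ▸ hQnn a' bb'⟩
end

section
/- Let N be a metric semidirected network with calibrating set E_c (edges outside E_c having length 0), satisfying: (1) Π_DTI d̄ ≠ 0, and (2) the average inheritance matrix Ā = Σ_T γ(T) A(T) is injective. Suppose the noiseless distance data satisfies δ^{(k)} = r_k A(T^{(k)}) b with gene tree frequencies matching probabilities, i.e., (1/K) Σ_k 1(T^{(k)} = T) = γ(T) for all T. Then the unique minimizer of Q_DTI(α̂, b̂) = ‖(I − Π_DTI)((1/K)Σ_k α̂_k δ^{(k)} − Ā b̂)‖² + λ Σ_k ‖Π_DTI(α̂_k δ^{(k)} − Ā b̂)‖²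 subject to z^T α̂ = 1 (with z ≻ 0, λ > 0) is (α*, b*) = (cα, cb), where α = (r_1^{-1},…,r_K^{-1}) and c = (z^T α)^{-1}. -/
/-!
The projection `Π_DTI` forgets which displayed tree a gene evolved on: since `Π_DTI` is
symmetric, its rows lie in `V_DTI`, so `Π_DTI A(T) = Π_DTI Ā` for every `T`. For noiseless data
`δ⁽ᵏ⁾ = r_k A(T⁽ᵏ⁾) b` this makes every term of `Q_DTI` vanish at `(μ α, μ b)` for every scalar
`μ`; for the first term one also uses that the gene tree frequencies turn the mean of the
`A(T⁽ᵏ⁾) b` into `Ā b`. Conversely `Q_DTI = 0` forces `α̂_k r_k Π_DTI d̄ = Π_DTI Ā b̂` for every `k`,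
so `Π_DTI d̄ ≠ 0` makes `α̂_k r_k` a common scalar `μ`, after which the first term and the
injectivity of `Ā` give `b̂ = μ b`. As `Q_DTI ≥ 0`, its constrained minimizers are its zeros on the
constraint set, and `zᵀα̂ = 1` pins `μ = c`.
-/

open Matrix

namespace Matrix

variable {m n R : Type*} [Fintype m] [CommSemiring R]

theorem mul_eq_mul_of_forall_vecMul_mulVec [DecidableEq m] {Pr : Matrix m m R}
    (hsym : Prᵀ = Pr) {M N : Matrix m n R}
    (h : ∀ u, (Pr *ᵥ u) ᵥ* M = (Pr *ᵥ u) ᵥ* N) : Pr * M = Pr * N := by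
  ext i j
  have hrow := congrFun (h (Pi.single i 1)) j
  rw [mulVec_single_one] at hrow
  rw [← hsym]
  simpa [vecMul, dotProduct, mul_apply] using hrow

theorem mul_sum_smul_of_forall_mul_eq {ι : Type*} [Fintype ι] {Pr : Matrix m m R}
    {A : ι → Matrix m n R} {γ : ι → R} (hγ : ∑ T, γ T = 1)
    (hA : ∀ T T', Pr * A T = Pr * A T') (T : ι) : Pr * ∑ T', γ T' • A T' = Pr * A T := by
  simp_rw [Matrix.mul_sum, Matrix.mul_smul, hA _ T, ← Finset.sum_smul, hγ, one_smul]

theorem dotProduct_self_nonneg {S : Type*} [Ring S] [LinearOrder S] [IsStrictOrderedRing S]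
    (v : m → S) : 0 ≤ v ⬝ᵥ v :=
  Finset.sum_nonneg fun i _ => mul_self_nonneg (v i)

end Matrix

theorem sum_comp_eq_smul_sum_smul_of_freq {𝕜 ι V : Type*} [Field 𝕜] [CharZero 𝕜] [Fintype ι]
    [DecidableEq ι] [AddCommGroup V] [Module 𝕜 V] {K : ℕ} (hK : 0 < K) {t : Fin K → ι}
    {γ : ι → 𝕜} (hfreq : ∀ T, (∑ k, if t k = T then (1 : 𝕜) else 0) / K = γ T) (f : ι → V) :
    ∑ k, f (t k) = (K : 𝕜) • ∑ T, γ T • f T := by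
  have hcount : ∀ T, (∑ k, if t k = T then (1 : 𝕜) else 0) = K * γ T := fun T => by
    rw [← hfreq, mul_div_cancel₀ _ (Nat.cast_ne_zero.2 hK.ne')]
  calc ∑ k, f (t k) = ∑ T, ∑ k with t k = T, f T := by
        rw [← Finset.sum_fiberwise Finset.univ t]
        exact Finset.sum_congr rfl fun T _ => Finset.sum_congr rfl fun k hk =>
          by rw [(Finset.mem_filter.1 hk).2]
    _ = ∑ T, (∑ k, if t k = T then (1 : 𝕜) else 0) • f T := by
        simp [Finset.sum_boole, Nat.cast_smul_eq_nsmul]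
    _ = (K : 𝕜) • ∑ T, γ T • f T := by
        simp_rw [hcount, Finset.smul_sum, smul_smul]

theorem and_forall_le_iff_and_eq_zero {α β : Type*} {p : α → Prop} {f : α → β → ℝ}
    (hf : ∀ a b, 0 ≤ f a b) {a₀ : α} {b₀ : β} (hp : p a₀) (h₀ : f a₀ b₀ = 0) (a : α) (b : β) :
    (p a ∧ ∀ a' b', p a' → f a b ≤ f a' b') ↔ (p a ∧ f a b = 0) :=
  and_congr_right fun _ =>
    ⟨fun hmin => le_antisymm (h₀ ▸ hmin a₀ b₀ hp) (hf a b),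
      fun h a' b' _ => h ▸ hf a' b'⟩

section DTI

variable {K : ℕ} {m n : Type*} [Fintype m] [Fintype n]

/-- `Q_DTI(α̂, b̂)` for the data `δ`, with `Pr` in the role of `Π_DTI`. -/
noncomputable def dtiCriterion (Pr : Matrix m m ℝ) (Abar : Matrix m n ℝ) (lam : ℝ)
    (δ : Fin K → m → ℝ) (a : Fin K → ℝ) (bb : n → ℝ) : ℝ :=
  (((K : ℝ)⁻¹ • (∑ k, a k • δ k) - Abar *ᵥ bb)
      - Pr *ᵥ ((K : ℝ)⁻¹ • (∑ k, a k • δ k) - Abar *ᵥ bb)) ⬝ᵥ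
    (((K : ℝ)⁻¹ • (∑ k, a k • δ k) - Abar *ᵥ bb)
      - Pr *ᵥ ((K : ℝ)⁻¹ • (∑ k, a k • δ k) - Abar *ᵥ bb)) +
  lam * ∑ k, (Pr *ᵥ (a k • δ k - Abar *ᵥ bb)) ⬝ᵥ (Pr *ᵥ (a k • δ k - Abar *ᵥ bb))

variable {Pr : Matrix m m ℝ} {Abar : Matrix m n ℝ} {lam : ℝ} {δ : Fin K → m → ℝ}

theorem dtiCriterion_nonneg (hlam : 0 ≤ lam) (a : Fin K → ℝ) (bb : n → ℝ) :
    0 ≤ dtiCriterion Pr Abar lam δ a bb :=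
  add_nonneg (dotProduct_self_nonneg _)
    (mul_nonneg hlam (Finset.sum_nonneg fun _ _ => dotProduct_self_nonneg _))

theorem dtiCriterion_eq_zero_iff (hlam : 0 < lam) (a : Fin K → ℝ) (bb : n → ℝ) :
    dtiCriterion Pr Abar lam δ a bb = 0 ↔
      ((K : ℝ)⁻¹ • (∑ k, a k • δ k) - Abar *ᵥ bb)
          - Pr *ᵥ ((K : ℝ)⁻¹ • (∑ k, a k • δ k) - Abar *ᵥ bb) = 0 ∧
        ∀ k, Pr *ᵥ (a k • δ k - Abar *ᵥ bb) = 0 := by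
  rw [dtiCriterion, add_eq_zero_iff_of_nonneg (dotProduct_self_nonneg _)
      (mul_nonneg hlam.le (Finset.sum_nonneg fun _ _ => dotProduct_self_nonneg _)),
    mul_eq_zero, or_iff_right hlam.ne',
    Finset.sum_eq_zero_iff_of_nonneg fun _ _ => dotProduct_self_nonneg _]
  simp only [dotProduct_self_eq_zero, Finset.mem_univ, true_implies]

theorem dtiCriterion_eq_zero_iff_of_noiseless {ι : Type*} {A : ι → Matrix m n ℝ}
    {t : Fin K → ι} {r : Fin K → ℝ} {b : n → ℝ} (hK : 0 < K) (hlam : 0 < lam)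
    (hPA : ∀ T, Pr * A T = Pr * Abar) (hmean : ∑ k, A (t k) *ᵥ b = (K : ℝ) • Abar *ᵥ b)
    (hAinj : Function.Injective Abar.mulVec) (hproj : Pr *ᵥ (Abar *ᵥ b) ≠ 0)
    (hr : ∀ k, r k ≠ 0) (a : Fin K → ℝ) (bb : n → ℝ) :
    dtiCriterion Pr Abar lam (fun k => r k • A (t k) *ᵥ b) a bb = 0 ↔
      ∃ μ : ℝ, a = (fun k => μ / r k) ∧ bb = μ • b := by
  have hPAb : ∀ T, Pr *ᵥ (A T *ᵥ b) = Pr *ᵥ (Abar *ᵥ b) := fun T => by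
    rw [mulVec_mulVec, hPA, ← mulVec_mulVec]
  have hmean_smul : ∀ μ : ℝ, (K : ℝ)⁻¹ • ∑ k, μ • A (t k) *ᵥ b = μ • Abar *ᵥ b := fun μ => by
    rw [← Finset.smul_sum, hmean, smul_comm μ, inv_smul_smul₀ (Nat.cast_ne_zero.2 hK.ne')]
  simp_rw [dtiCriterion_eq_zero_iff hlam, smul_smul]
  constructor
  · rintro ⟨hfirst, hgene⟩
    let k₀ : Fin K := ⟨0, hK⟩
    have hPbb : ∀ k, (a k * r k) • Pr *ᵥ (Abar *ᵥ b) = Pr *ᵥ (Abar *ᵥ bb) := fun k =>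
      by simpa only [mulVec_sub, mulVec_smul, hPAb, sub_eq_zero] using hgene k
    have hμ : ∀ k, a k * r k = a k₀ * r k₀ := fun k =>
      smul_left_injective ℝ hproj ((hPbb k).trans (hPbb k₀).symm)
    have ha : a = fun k => a k₀ * r k₀ / r k := funext fun k => eq_div_of_mul_eq (hr k) (hμ k)
    refine ⟨a k₀ * r k₀, ha, hAinj ?_⟩
    have hPres : Pr *ᵥ ((a k₀ * r k₀) • Abar *ᵥ b - Abar *ᵥ bb) = 0 := by
      rw [mulVec_sub, mulVec_smul, hPbb, sub_self]
    simp_rw [hμ, hmean_smul, hPres, sub_zero, sub_eq_zero] at hfirst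
    rw [mulVec_smul, hfirst]
  · rintro ⟨μ, rfl, rfl⟩
    simp only [div_mul_cancel₀ _ (hr _), hmean_smul, mulVec_sub, mulVec_smul, hPAb, sub_self,
      mulVec_zero, implies_true, and_true]

end DTI

theorem dotProduct_div_eq_one_iff {𝕜 κ : Type*} [Field 𝕜] [Fintype κ] {z r : κ → 𝕜}
    (hS : ∑ k, z k / r k ≠ 0) (μ : 𝕜) :
    z ⬝ᵥ (fun k => μ / r k) = 1 ↔ μ = (∑ k, z k / r k)⁻¹ := by
  have hdot : z ⬝ᵥ (fun k => μ / r k) = μ * ∑ k, z k / r k := by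
    simp only [dotProduct, Finset.mul_sum, mul_div_left_comm]
  rw [hdot, ← one_div, eq_div_iff hS]

theorem stmt_5_general {K P E : ℕ} {ι : Type*} [Fintype ι] [DecidableEq ι] (hK : 0 < K)
    (A : ι → Matrix (Fin P) (Fin E) ℝ)
    (γ : ι → ℝ) (hγ1 : ∑ T, γ T = 1)
    (Abar : Matrix (Fin P) (Fin E) ℝ) (hAbar : Abar = ∑ T, γ T • A T)
    (hAinj : Function.Injective Abar.mulVec)
    (b : Fin E → ℝ)
    (Pr : Matrix (Fin P) (Fin P) ℝ)
    (hsym : Pr.transpose = Pr)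
    (hrange : ∀ v : Fin P → ℝ,
      (∃ u, Pr.mulVec u = v) ↔ ∀ T T' : ι, v ᵥ* A T = v ᵥ* A T')
    (hproj : Pr.mulVec (Abar.mulVec b) ≠ 0)
    (t : Fin K → ι) (r : Fin K → ℝ) (hr : ∀ k, 0 < r k)
    (δ : Fin K → Fin P → ℝ)
    (hδ : ∀ k, δ k = r k • (A (t k)).mulVec b)
    (hfreq : ∀ T, (∑ k, if t k = T then (1:ℝ) else 0) / K = γ T)
    (z : Fin K → ℝ) (hz : ∀ k, 0 < z k)
    (lam : ℝ) (hlam : 0 < lam)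
    (Q : (Fin K → ℝ) → (Fin E → ℝ) → ℝ)
    (hQ : ∀ a bb, Q a bb =
      (((K : ℝ)⁻¹ • (∑ k, a k • δ k) - Abar.mulVec bb)
          - Pr.mulVec ((K : ℝ)⁻¹ • (∑ k, a k • δ k) - Abar.mulVec bb)) ⬝ᵥ
        (((K : ℝ)⁻¹ • (∑ k, a k • δ k) - Abar.mulVec bb)
          - Pr.mulVec ((K : ℝ)⁻¹ • (∑ k, a k • δ k) - Abar.mulVec bb)) +
      lam * ∑ k,
        (Pr.mulVec (a k • δ k - Abar.mulVec bb)) ⬝ᵥ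
          (Pr.mulVec (a k • δ k - Abar.mulVec bb)))
    (c : ℝ) (hc : c = (∑ k, z k / r k)⁻¹) :
    ∀ a bb, ((z ⬝ᵥ a = 1) ∧ ∀ a' bb', z ⬝ᵥ a' = 1 → Q a bb ≤ Q a' bb') ↔
      ((a = fun k => c / r k) ∧ bb = c • b) := by
  have hPA : ∀ T, Pr * A T = Pr * Abar := fun T => by
    rw [hAbar, mul_sum_smul_of_forall_mul_eq hγ1 (fun T T' =>
      mul_eq_mul_of_forall_vecMul_mulVec hsym fun u => (hrange _).1 ⟨u, rfl⟩ T T') T]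
  have hmean : ∑ k, A (t k) *ᵥ b = (K : ℝ) • Abar *ᵥ b := by
    rw [sum_comp_eq_smul_sum_smul_of_freq hK hfreq fun T => A T *ᵥ b, hAbar, sum_mulVec]
    simp only [smul_mulVec]
  obtain rfl : δ = fun k => r k • A (t k) *ᵥ b := funext hδ
  obtain rfl : Q = dtiCriterion Pr Abar lam (fun k => r k • A (t k) *ᵥ b) := funext₂ hQ
  have hzero := dtiCriterion_eq_zero_iff_of_noiseless hK hlam hPA hmean hAinj hproj
    fun k => (hr k).ne'
  have hconstr := dotProduct_div_eq_one_iff (z := z) (r := r)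
    (Finset.sum_pos (fun k _ => div_pos (hz k) (hr k)) ⟨⟨0, hK⟩, Finset.mem_univ _⟩).ne'
  subst hc
  intro a bb
  refine (and_forall_le_iff_and_eq_zero (p := fun a => z ⬝ᵥ a = 1)
    (dtiCriterion_nonneg hlam.le) ((hconstr _).2 rfl) ((hzero _ _).2 ⟨_, rfl, rfl⟩) a bb).trans ?_
  rw [hzero]
  constructor
  · rintro ⟨hza, μ, rfl, rfl⟩
    obtain rfl := (hconstr μ).1 hza
    exact ⟨rfl, rfl⟩
  · rintro ⟨rfl, rfl⟩
    exact ⟨(hconstr _).2 rfl, _, rfl, rfl⟩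

/-- Consistency of the composite criterion `Q_DTI` in the
noiseless case: under (1) `Π_DTI d̄ ≠ 0` and (2) injectivity of the average
inheritance matrix `Ā`, with noiseless data `δ⁽ᵏ⁾ = r_k A(T⁽ᵏ⁾) b` and gene
tree frequencies matching the displayed tree probabilities, the unique
minimizer of `Q_DTI` subject to `zᵀα̂ = 1` is `(cα, cb)` with
`α = (r₁⁻¹,…,r_K⁻¹)` and `c = (zᵀα)⁻¹`. `Pr` is the orthogonal projection
(symmetric idempotent matrix) onto `V_DTI`. -/
theorem stmt_5 {K P E : ℕ} {ι : Type*} [Fintype ι] [DecidableEq ι] (hK : 0 < K)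
    (A : ι → Matrix (Fin P) (Fin E) ℝ)
    (γ : ι → ℝ) (hγ : ∀ T, 0 ≤ γ T) (hγ1 : ∑ T, γ T = 1)
    (Abar : Matrix (Fin P) (Fin E) ℝ) (hAbar : Abar = ∑ T, γ T • A T)
    (hAinj : Function.Injective Abar.mulVec)
    (b : Fin E → ℝ)
    (Pr : Matrix (Fin P) (Fin P) ℝ)
    (hidem : Pr * Pr = Pr) (hsym : Pr.transpose = Pr)
    (hrange : ∀ v : Fin P → ℝ,
      (∃ u, Pr.mulVec u = v) ↔ ∀ T T' : ι, v ᵥ* A T = v ᵥ* A T')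
    (hproj : Pr.mulVec (Abar.mulVec b) ≠ 0)
    (t : Fin K → ι) (r : Fin K → ℝ) (hr : ∀ k, 0 < r k)
    (δ : Fin K → Fin P → ℝ)
    (hδ : ∀ k, δ k = r k • (A (t k)).mulVec b)
    (hfreq : ∀ T, (∑ k, if t k = T then (1:ℝ) else 0) / K = γ T)
    (z : Fin K → ℝ) (hz : ∀ k, 0 < z k)
    (lam : ℝ) (hlam : 0 < lam)
    (Q : (Fin K → ℝ) → (Fin E → ℝ) → ℝ)
    (hQ : ∀ a bb, Q a bb =
      (((K : ℝ)⁻¹ • (∑ k, a k • δ k) - Abar.mulVec bb)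
          - Pr.mulVec ((K : ℝ)⁻¹ • (∑ k, a k • δ k) - Abar.mulVec bb)) ⬝ᵥ
        (((K : ℝ)⁻¹ • (∑ k, a k • δ k) - Abar.mulVec bb)
          - Pr.mulVec ((K : ℝ)⁻¹ • (∑ k, a k • δ k) - Abar.mulVec bb)) +
      lam * ∑ k,
        (Pr.mulVec (a k • δ k - Abar.mulVec bb)) ⬝ᵥ
          (Pr.mulVec (a k • δ k - Abar.mulVec bb)))
    (c : ℝ) (hc : c = (∑ k, z k / r k)⁻¹) :
    ∀ a bb, ((z ⬝ᵥ a = 1) ∧ ∀ a' bb', z ⬝ᵥ a' = 1 → Q a bb ≤ Q a' bb') ↔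
      ((a = fun k => c / r k) ∧ bb = c • b) :=
  stmt_5_general hK A γ hγ1 Abar hAbar hAinj b Pr hsym hrange hproj t r hr δ hδ hfreq z hz lam hlam
    Q hQ c hc
end

section
/- In a tree-child rooted phylogenetic network, from every node there exists a path to some leaf consisting entirely of tree edges (edges whose child endpoint has in-degree 1). -/
/-- In a tree-child rooted phylogenetic network (finite acyclic
digraph where leaves have out-degree 0 and in-degree 1, and every internal
node has a child of in-degree 1), from every node there is a path to some
leaf consisting entirely of tree edges (edges whose child endpoint has
in-degree 1). -/
theorem stmt_11 {V : Type*} [Fintype V]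
    (E : V → V → Prop)
    (hacyc : ∀ v, ¬Relation.TransGen E v v)
    (inDeg outDeg : V → ℕ)
    (hin : ∀ v, inDeg v = {u | E u v}.ncard)
    (hout : ∀ v, outDeg v = {u | E v u}.ncard)
    (hleafin : ∀ v, outDeg v = 0 → inDeg v = 1)
    (htc : ∀ v, outDeg v ≠ 0 → ∃ w, E v w ∧ inDeg w = 1) :
    ∀ u, ∃ v, outDeg v = 0 ∧
      Relation.ReflTransGen (fun a b => E a b ∧ inDeg b = 1) u v := by
  have hwf : WellFounded (fun a b : V => Relation.TransGen E b a) :=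
    have : IsTrans V (fun a b : V => Relation.TransGen E b a) :=
      ⟨fun a b c h1 h2 => Relation.TransGen.trans h2 h1⟩
    have : IsIrrefl V (fun a b : V => Relation.TransGen E b a) := ⟨hacyc⟩
    Finite.wellFounded_of_trans_of_irrefl _
  intro u
  induction u using hwf.induction with
  | _ u ih =>
    by_cases h : outDeg u = 0
    · exact ⟨u, h, Relation.ReflTransGen.refl⟩
    · obtain ⟨w, hEw, hiw⟩ := htc u h
      obtain ⟨v, hv0, hpath⟩ := ih w (Relation.TransGen.single hEw)
      exact ⟨v, hv0, Relation.ReflTransGen.head ⟨hEw, hiw⟩ hpath⟩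
end

section
/- Let D_disp and Ā be matrices with common row dimension, b ⪰ 0 and γ_𝒯 ⪰ 0 with D_disp γ_𝒯 = Ā b ≠ 0. If dim(im⁺(D_disp) ∩ im⁺(Ā)) = 1 and Ā is injective, then any b' ⪰ 0 and β' ⪰ 0 with Ā b' = D_disp β' satisfy b' = cb for some c ≥ 0. -/
open Matrix

/-- Key linear-algebra step for `Q_avg`: if
`D_disp γ = Ā b ≠ 0`, the cone `im⁺(D_disp) ∩ im⁺(Ā)` spans a line, and `Ā`
is injective, then any `b' ⪰ 0` and `β' ⪰ 0` with `Ā b' = D_disp β'` satisfy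
`b' = c b` for some `c ≥ 0`. -/
theorem stmt_15 {P L E : ℕ}
    (Dd : Matrix (Fin P) (Fin L) ℝ) (Abar : Matrix (Fin P) (Fin E) ℝ)
    (b : Fin E → ℝ) (hb : ∀ e, 0 ≤ b e)
    (γ : Fin L → ℝ) (hγ : ∀ l, 0 ≤ γ l)
    (heq : Dd.mulVec γ = Abar.mulVec b) (hne : Abar.mulVec b ≠ 0)
    (hdim : Module.finrank ℝ (Submodule.span ℝ
      ({y : Fin P → ℝ | ∃ x : Fin L → ℝ, (∀ l, 0 ≤ x l) ∧ Dd.mulVec x = y} ∩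
       {y : Fin P → ℝ | ∃ x : Fin E → ℝ, (∀ e, 0 ≤ x e) ∧ Abar.mulVec x = y})) = 1)
    (hinj : Function.Injective Abar.mulVec)
    (b' : Fin E → ℝ) (hb' : ∀ e, 0 ≤ b' e)
    (β' : Fin L → ℝ) (hβ' : ∀ l, 0 ≤ β' l)
    (h : Abar.mulVec b' = Dd.mulVec β') :
    ∃ c : ℝ, 0 ≤ c ∧ b' = c • b := by
  set S := ({y : Fin P → ℝ | ∃ x : Fin L → ℝ, (∀ l, 0 ≤ x l) ∧ Dd.mulVec x = y} ∩
       {y : Fin P → ℝ | ∃ x : Fin E → ℝ, (∀ e, 0 ≤ x e) ∧ Abar.mulVec x = y}) with hS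
  have hvS : Abar.mulVec b ∈ S := ⟨⟨γ, hγ, heq⟩, ⟨b, hb, rfl⟩⟩
  have hwS : Abar.mulVec b' ∈ S := ⟨⟨β', hβ', h.symm⟩, ⟨b', hb', rfl⟩⟩
  have hle : Submodule.span ℝ {Abar.mulVec b} ≤ Submodule.span ℝ S :=
    Submodule.span_mono (Set.singleton_subset_iff.2 hvS)
  have heqspan : Submodule.span ℝ {Abar.mulVec b} = Submodule.span ℝ S := by
    apply Submodule.eq_of_le_of_finrank_le hle
    rw [hdim, finrank_span_singleton hne]
  have hw : Abar.mulVec b' ∈ Submodule.span ℝ {Abar.mulVec b} := by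
    rw [heqspan]; exact Submodule.subset_span hwS
  obtain ⟨c, hc⟩ := Submodule.mem_span_singleton.1 hw
  have hb'eq : b' = c • b := by
    apply hinj
    rw [← hc, Matrix.mulVec_smul]
  -- show c ≥ 0 : since Abar.mulVec b ≠ 0, b ≠ 0, so some coordinate positive
  have hbne : b ≠ 0 := by
    intro h0; apply hne; rw [h0, Matrix.mulVec_zero]
  obtain ⟨e, he⟩ : ∃ e, 0 < b e := by
    by_contra hcon
    push_neg at hcon
    exact hbne (funext fun e => le_antisymm (hcon e) (hb e))
  have : 0 ≤ c * b e := by rw [← smul_eq_mul, ← Pi.smul_apply, ← hb'eq]; exact hb' e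
  exact ⟨c, nonneg_of_mul_nonneg_right (by linarith [this] : 0 ≤ b e * c) he, hb'eq⟩
end

section
/- Let N⁺ be a rooted time-consistent network with node age vector t satisfying: all leaves have age 0 (C_2 t = 0 encodes leaf ages and hybrid-parent age equalities) and every edge (u,v) satisfies τ(u) ≥ τ(v). Suppose Π_DTI d̄ ≠ 0 and t is identifiable from average distances under these constraints. Given noiseless data δ^{(k)} = r_k B(T^{(k)}) t with gene tree frequencies equal to displayed tree probabilities, the unique minimizer of Q_DTI(α̂, t̂) = ‖(I − Π_DTI)((1/K)Σ_k α̂_k δ^{(k)} − B̄ t̂)‖² + λΣ_k ‖Π_DTI(α̂_k δ^{(k)} − B̄ t̂)‖² subject to z^T α̂ = 1, C_1 t̂ ⪰ 0, C_2 t̂ = 0 is (cα, ct) with α = (r_1^{-1},…,r_K^{-1}) and c = (z^T α)^{-1}. -/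
open Matrix BigOperators

/-- Constrained network calibration: under `Π_DTI d̄ ≠ 0` and
identifiability of node ages from average distances under the constraints
`C₁ t ⪰ 0`, `C₂ t = 0`, with noiseless data `δ⁽ᵏ⁾ = r_k B(T⁽ᵏ⁾) t` and gene
tree frequencies matching displayed tree probabilities, the unique minimizer
of the constrained `Q_DTI` subject to `zᵀα̂ = 1`, `C₁ t̂ ⪰ 0`, `C₂ t̂ = 0`
is `(cα, ct)` with `α = (r₁⁻¹,…,r_K⁻¹)` and `c = (zᵀα)⁻¹`. -/
theorem stmt_17 {K P Vn q1 q2 : ℕ} {ι : Type*} [Fintype ι] [DecidableEq ι] (hK : 0 < K)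
    (B : ι → Matrix (Fin P) (Fin Vn) ℝ)
    (γ : ι → ℝ) (hγ : ∀ T, 0 ≤ γ T) (hγ1 : ∑ T, γ T = 1)
    (Bbar : Matrix (Fin P) (Fin Vn) ℝ) (hBbar : Bbar = ∑ T, γ T • B T)
    (C1 : Matrix (Fin q1) (Fin Vn) ℝ) (C2 : Matrix (Fin q2) (Fin Vn) ℝ)
    (tt : Fin Vn → ℝ)
    (ht1 : ∀ i, 0 ≤ C1.mulVec tt i) (ht2 : C2.mulVec tt = 0)
    (Pr : Matrix (Fin P) (Fin P) ℝ)
    (hidem : Pr * Pr = Pr) (hsym : Pr.transpose = Pr)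
    (hrange : ∀ v : Fin P → ℝ,
      (∃ u, Pr.mulVec u = v) ↔ ∀ T T' : ι, v ᵥ* B T = v ᵥ* B T')
    (hproj : Pr.mulVec (Bbar.mulVec tt) ≠ 0)
    (hident : ∀ t1 t2 : Fin Vn → ℝ,
      (∀ i, 0 ≤ C1.mulVec t1 i) → C2.mulVec t1 = 0 →
      (∀ i, 0 ≤ C1.mulVec t2 i) → C2.mulVec t2 = 0 →
      Bbar.mulVec t1 = Bbar.mulVec t2 → t1 = t2)
    (gt : Fin K → ι) (r : Fin K → ℝ) (hr : ∀ k, 0 < r k)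
    (δ : Fin K → Fin P → ℝ)
    (hδ : ∀ k, δ k = r k • (B (gt k)).mulVec tt)
    (hfreq : ∀ T, (∑ k, if gt k = T then (1:ℝ) else 0) / K = γ T)
    (z : Fin K → ℝ) (hz : ∀ k, 0 < z k)
    (lam : ℝ) (hlam : 0 < lam)
    (Q : (Fin K → ℝ) → (Fin Vn → ℝ) → ℝ)
    (hQ : ∀ a th, Q a th =
      (((K : ℝ)⁻¹ • (∑ k, a k • δ k) - Bbar.mulVec th)
          - Pr.mulVec ((K : ℝ)⁻¹ • (∑ k, a k • δ k) - Bbar.mulVec th)) ⬝ᵥ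
        (((K : ℝ)⁻¹ • (∑ k, a k • δ k) - Bbar.mulVec th)
          - Pr.mulVec ((K : ℝ)⁻¹ • (∑ k, a k • δ k) - Bbar.mulVec th)) +
      lam * ∑ k,
        (Pr.mulVec (a k • δ k - Bbar.mulVec th)) ⬝ᵥ
          (Pr.mulVec (a k • δ k - Bbar.mulVec th)))
    (c : ℝ) (hc : c = (∑ k, z k / r k)⁻¹) :
    ∀ a th, ((z ⬝ᵥ a = 1 ∧ (∀ i, 0 ≤ C1.mulVec th i) ∧ C2.mulVec th = 0) ∧
        ∀ a' th', (z ⬝ᵥ a' = 1 ∧ (∀ i, 0 ≤ C1.mulVec th' i) ∧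
            C2.mulVec th' = 0) → Q a th ≤ Q a' th') ↔
      ((a = fun k => c / r k) ∧ th = c • tt) := by
  have hKfin : Nonempty (Fin K) := Fin.pos_iff_nonempty.mp hK
  have hSpos : 0 < ∑ k, z k / r k :=
    Finset.sum_pos (fun k _ => div_pos (hz k) (hr k)) Finset.univ_nonempty
  have hSne : (∑ k, z k / r k) ≠ 0 := ne_of_gt hSpos
  have hcpos : 0 < c := by rw [hc]; exact inv_pos.mpr hSpos
  have hcS : c * ∑ k, z k / r k = 1 := by rw [hc]; field_simp
  -- dot product helpers
  have dotself_nonneg : ∀ v : Fin P → ℝ, 0 ≤ v ⬝ᵥ v :=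
    fun v => Finset.sum_nonneg fun i _ => mul_self_nonneg _
  have dot_sum : ∀ (v : Fin P → ℝ) (f : ι → Fin P → ℝ),
      v ⬝ᵥ (∑ T, f T) = ∑ T, v ⬝ᵥ f T := by
    intro v f
    simp only [dotProduct, Finset.sum_apply, Finset.mul_sum]
    rw [Finset.sum_comm]
  -- key A : ⟪Pr x, Pr x⟫ = ⟪Pr x, x⟫
  have keyA : ∀ x : Fin P → ℝ, Pr.mulVec x ⬝ᵥ Pr.mulVec x = Pr.mulVec x ⬝ᵥ x := by
    intro x
    have h1 : Pr.mulVec x = x ᵥ* Pr := by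
      rw [← Matrix.mulVec_transpose, hsym]
    rw [Matrix.dotProduct_mulVec]
    congr 1
    rw [h1, Matrix.vecMul_vecMul, hidem]
  -- Bbar t as a sum
  have hBt : Bbar.mulVec tt = ∑ T, γ T • (B T).mulVec tt := by
    rw [hBbar]
    ext i
    simp only [Matrix.mulVec, dotProduct, Matrix.sum_apply, Matrix.smul_apply,
      Finset.sum_apply, Pi.smul_apply, smul_eq_mul, Finset.sum_mul, Finset.mul_sum,
      mul_assoc]
    rw [Finset.sum_comm]
  -- key B : Pr (B T t) = Pr (Bbar t)
  have keyB : ∀ T : ι, Pr.mulVec ((B T).mulVec tt) = Pr.mulVec (Bbar.mulVec tt) := by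
    intro T
    have hx0 : Pr.mulVec ((B T).mulVec tt - Bbar.mulVec tt) = 0 := by
      rw [← dotProduct_self_eq_zero, keyA]
      set x := (B T).mulVec tt - Bbar.mulVec tt with hxdef
      have hv := (hrange (Pr.mulVec x)).mp ⟨x, rfl⟩
      have hdot : ∀ T' : ι, Pr.mulVec x ⬝ᵥ (B T').mulVec tt
          = Pr.mulVec x ⬝ᵥ (B T).mulVec tt := by
        intro T'
        rw [Matrix.dotProduct_mulVec, Matrix.dotProduct_mulVec, hv T' T]
      have h2 : Pr.mulVec x ⬝ᵥ Bbar.mulVec tt = Pr.mulVec x ⬝ᵥ (B T).mulVec tt := by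
        rw [hBt, dot_sum]
        have : ∀ T' : ι, Pr.mulVec x ⬝ᵥ (γ T' • (B T').mulVec tt)
            = γ T' * (Pr.mulVec x ⬝ᵥ (B T).mulVec tt) := by
          intro T'
          rw [dotProduct_smul, hdot T']
          simp [smul_eq_mul]
        rw [Finset.sum_congr rfl fun T' _ => this T', ← Finset.sum_mul, hγ1, one_mul]
      calc Pr.mulVec x ⬝ᵥ x
          = Pr.mulVec x ⬝ᵥ ((B T).mulVec tt) - Pr.mulVec x ⬝ᵥ (Bbar.mulVec tt) := by
            rw [hxdef, dotProduct_sub]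
        _ = 0 := by rw [h2, sub_self]
    rw [Matrix.mulVec_sub] at hx0
    exact sub_eq_zero.mp hx0
  set p := Pr.mulVec (Bbar.mulVec tt) with hp
  -- averaging lemma
  have keyC : (K : ℝ)⁻¹ • ∑ k, (B (gt k)).mulVec tt = Bbar.mulVec tt := by
    have h1 : ∑ k, (B (gt k)).mulVec tt
        = ∑ T, (∑ k, if gt k = T then (1:ℝ) else 0) • (B T).mulVec tt := by
      have : ∀ k : Fin K, (B (gt k)).mulVec tt
          = ∑ T, if gt k = T then (B T).mulVec tt else 0 := by
        intro k; rw [Finset.sum_ite_eq]; simp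
      rw [Finset.sum_congr rfl fun k _ => this k, Finset.sum_comm]
      refine Finset.sum_congr rfl fun T _ => ?_
      rw [Finset.sum_smul]
      refine Finset.sum_congr rfl fun k _ => ?_
      split <;> simp
    rw [h1, Finset.smul_sum, hBt]
    refine Finset.sum_congr rfl fun T _ => ?_
    rw [smul_smul, ← hfreq T]
    congr 1
    rw [div_eq_inv_mul]
  have hBct : Bbar.mulVec (c • tt) = c • Bbar.mulVec tt := Matrix.mulVec_smul _ _ _
  -- feasibility of the candidate
  have hzfeas : z ⬝ᵥ (fun k => c / r k) = 1 := by
    unfold dotProduct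
    calc ∑ k, z k * (c / r k) = c * ∑ k, z k / r k := by
          rw [Finset.mul_sum]; refine Finset.sum_congr rfl fun k _ => ?_; ring
      _ = 1 := hcS
  have hC1feas : ∀ i, 0 ≤ C1.mulVec (c • tt) i := by
    intro i
    rw [Matrix.mulVec_smul]
    exact smul_nonneg (le_of_lt hcpos) (ht1 i)
  have hC2feas : C2.mulVec (c • tt) = 0 := by
    rw [Matrix.mulVec_smul, ht2, smul_zero]
  -- δ computations
  have hδc : ∀ k : Fin K, (c / r k) • δ k = c • (B (gt k)).mulVec tt := by
    intro k
    rw [hδ k, smul_smul, div_mul_cancel₀ _ (ne_of_gt (hr k))]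
  -- Q at the candidate is zero
  have hQzero : Q (fun k => c / r k) (c • tt) = 0 := by
    rw [hQ]
    have hsum : (K : ℝ)⁻¹ • (∑ k, (c / r k) • δ k) = Bbar.mulVec (c • tt) := by
      rw [Finset.sum_congr rfl fun k _ => hδc k, ← Finset.smul_sum, smul_comm,
        keyC, hBct]
    have hfirst : (K : ℝ)⁻¹ • (∑ k, (c / r k) • δ k) - Bbar.mulVec (c • tt) = 0 := by
      rw [hsum, sub_self]
    have hsecond : ∀ k : Fin K,
        Pr.mulVec ((c / r k) • δ k - Bbar.mulVec (c • tt)) = 0 := by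
      intro k
      rw [hδc k, hBct, Matrix.mulVec_sub, Matrix.mulVec_smul, Matrix.mulVec_smul,
        keyB, sub_self]
    rw [hfirst]
    simp only [Matrix.mulVec_zero, sub_zero, zero_dotProduct]
    rw [Finset.sum_congr rfl fun k _ => by rw [hsecond k, zero_dotProduct]]
    simp
  -- Q is nonneg
  have hQnonneg : ∀ a' th', 0 ≤ Q a' th' := by
    intro a' th'
    rw [hQ]
    have h2 : 0 ≤ ∑ k, (Pr.mulVec (a' k • δ k - Bbar.mulVec th')) ⬝ᵥ
        (Pr.mulVec (a' k • δ k - Bbar.mulVec th')) :=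
      Finset.sum_nonneg fun k _ => dotself_nonneg _
    have := dotself_nonneg (((K : ℝ)⁻¹ • (∑ k, a' k • δ k) - Bbar.mulVec th')
          - Pr.mulVec ((K : ℝ)⁻¹ • (∑ k, a' k • δ k) - Bbar.mulVec th'))
    nlinarith
  intro a th
  constructor
  · rintro ⟨⟨hza, hC1a, hC2a⟩, hmin⟩
    have hle : Q a th ≤ 0 := by
      rw [← hQzero]
      exact hmin _ _ ⟨hzfeas, hC1feas, hC2feas⟩
    have hQ0 : Q a th = 0 := le_antisymm hle (hQnonneg a th)
    -- split into two zero parts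
    set x := (K : ℝ)⁻¹ • (∑ k, a k • δ k) - Bbar.mulVec th with hxdef
    have hA : 0 ≤ (x - Pr.mulVec x) ⬝ᵥ (x - Pr.mulVec x) := dotself_nonneg _
    have hB2 : 0 ≤ ∑ k, (Pr.mulVec (a k • δ k - Bbar.mulVec th)) ⬝ᵥ
        (Pr.mulVec (a k • δ k - Bbar.mulVec th)) :=
      Finset.sum_nonneg fun k _ => dotself_nonneg _
    have hQexp := hQ a th
    rw [hQ0] at hQexp
    have hAzero : (x - Pr.mulVec x) ⬝ᵥ (x - Pr.mulVec x) = 0 := by nlinarith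
    have hSzero : ∑ k, (Pr.mulVec (a k • δ k - Bbar.mulVec th)) ⬝ᵥ
        (Pr.mulVec (a k • δ k - Bbar.mulVec th)) = 0 := by nlinarith
    have hterm : ∀ k : Fin K, Pr.mulVec (a k • δ k - Bbar.mulVec th) = 0 := by
      intro k
      have := (Finset.sum_eq_zero_iff_of_nonneg
        (fun k _ => dotself_nonneg (Pr.mulVec (a k • δ k - Bbar.mulVec th)))).mp
        hSzero k (Finset.mem_univ k)
      exact dotProduct_self_eq_zero.mp this
    set q := Pr.mulVec (Bbar.mulVec th) with hq
    have hterm' : ∀ k : Fin K, (a k * r k) • p = q := by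
      intro k
      have h0 := hterm k
      rw [Matrix.mulVec_sub, sub_eq_zero] at h0
      rw [hp, hq, ← h0, hδ k, Matrix.mulVec_smul, Matrix.mulVec_smul, keyB, smul_smul]
    -- p ≠ 0, extract common scalar
    obtain ⟨j, hj⟩ := Function.ne_iff.mp hproj
    have hjne : p j ≠ 0 := hj
    set s := q j / p j with hs
    have hark : ∀ k : Fin K, a k * r k = s := by
      intro k
      have := congrFun (hterm' k) j
      simp only [Pi.smul_apply, smul_eq_mul] at this
      rw [hs, ← this, mul_div_cancel_right₀ _ hjne]
    have hsc : s = c := by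
      have h1 : z ⬝ᵥ a = s * ∑ k, z k / r k := by
        unfold dotProduct
        rw [Finset.mul_sum]
        refine Finset.sum_congr rfl fun k _ => ?_
        have : a k = s / r k := by
          rw [← hark k, mul_div_cancel_right₀ _ (ne_of_gt (hr k))]
        rw [this]; ring
      rw [hza] at h1
      have h2 : s * ∑ k, z k / r k = c * ∑ k, z k / r k := by rw [← h1, hcS]
      exact mul_right_cancel₀ hSne h2
    have ha : a = fun k => c / r k := by
      funext k
      rw [← hsc, ← hark k, mul_div_cancel_right₀ _ (ne_of_gt (hr k))]
    -- now th
    have hq' : q = c • p := by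
      obtain ⟨k0⟩ := hKfin
      rw [← hterm' k0, hark k0, hsc]
    have hsum2 : (K : ℝ)⁻¹ • (∑ k, a k • δ k) = c • Bbar.mulVec tt := by
      have : ∀ k : Fin K, a k • δ k = c • (B (gt k)).mulVec tt := by
        intro k
        rw [ha]
        exact hδc k
      rw [Finset.sum_congr rfl fun k _ => this k, ← Finset.smul_sum, smul_comm, keyC]
    have hPrx : Pr.mulVec x = 0 := by
      have e1 : Pr.mulVec x = c • p - q := by
        rw [hxdef, Matrix.mulVec_sub, hsum2, Matrix.mulVec_smul, hp, hq]
      rw [e1, hq', sub_self]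
    have hx0 : x = 0 := by
      have h0 : x - Pr.mulVec x = 0 := dotProduct_self_eq_zero.mp hAzero
      rw [hPrx, sub_zero] at h0
      exact h0
    have hBeq : Bbar.mulVec th = Bbar.mulVec (c • tt) := by
      have hx0' : (K : ℝ)⁻¹ • (∑ k, a k • δ k) - Bbar.mulVec th = 0 := by
        rw [← hxdef]; exact hx0
      have := sub_eq_zero.mp hx0'
      rw [← this, hsum2, hBct]
    have hth : th = c • tt :=
      hident th (c • tt) hC1a hC2a hC1feas hC2feas hBeq
    exact ⟨ha, hth⟩
  · rintro ⟨ha, hth⟩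
    subst ha hth
    refine ⟨⟨hzfeas, hC1feas, hC2feas⟩, ?_⟩
    intro a' th' _
    rw [hQzero]
    exact hQnonneg a' th'
end
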